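/- Let ω be a density matrix on a finite-dimensional Hilbert space with spectral decomposition ω = ∑_{λ∈spec(ω)} λ P_λ, and define the pinching map P_ω(X) := ∑_{λ∈spec(ω)} P_λ X P_λ. Then for every positive semidefinite operator X, |spec(ω)| · P_ω(X) ≥ X in the Loewner order, where |spec(ω)| is the number of distinct eigenvalues of ω. -/

import Mathlib

noncomputable section
open scoped BigOperators ComplexOrder

variable {n : Type*} [Fintype n] [DecidableEq n]

/-- A density matrix: positive semidefinite with trace one. -/
def IsDensity (ρ : Matrix n n ℂ) : Prop := ρ.PosSemidef ∧ ρ.trace = 1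

/-- Apply a real function to a Hermitian matrix via the functional calculus
(junk value `0` if the matrix is not Hermitian). -/
noncomputable def matFun (A : Matrix n n ℂ) (f : ℝ → ℝ) : Matrix n n ℂ :=
  if h : A.IsHermitian then h.cfc f else 0

/-- The set of distinct (real) eigenvalues of a matrix (junk `∅` if not Hermitian). -/
noncomputable def specSet (A : Matrix n n ℂ) : Finset ℝ :=
  if h : A.IsHermitian then Finset.image h.eigenvalues Finset.univ else ∅

/-- The spectral projection of `A` onto the eigenspace of eigenvalue `lam`. -/
noncomputable def specProj (A : Matrix n n ℂ) (lam : ℝ) : Matrix n n ℂ :=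
  matFun A (fun x => if x = lam then 1 else 0)

/-- The pinching map `P_ω(X) = ∑_{λ ∈ spec(ω)} P_λ X P_λ`. -/
noncomputable def pinch (ω X : Matrix n n ℂ) : Matrix n n ℂ :=
  ∑ lam ∈ specSet ω, specProj ω lam * X * specProj ω lam

/-!
Expanding the square and using only that the spectral projections `P_λ` are Hermitian and sum
to `1` gives `∑_{λ,μ} (P_λ - P_μ) X (P_λ - P_μ) = 2 (|spec ω| • P_ω(X) - X)`; each summand is a
congruence of `X`, hence positive semidefinite.
-/

theorem Finset.sum_sum_sub_mul_mul_sub {R ι : Type*} [Ring R] (s : Finset ι) {P : ι → R}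
    (hP : ∑ i ∈ s, P i = 1) (x : R) :
    ∑ i ∈ s, ∑ j ∈ s, (P i - P j) * x * (P i - P j) =
      2 • (s.card • ∑ i ∈ s, P i * x * P i - x) := by
  have hleft : ∀ i, ∑ j ∈ s, P i * x * P j = P i * x := fun i => by
    rw [← Finset.mul_sum, hP, mul_one]
  have hright : ∀ j, ∑ i ∈ s, P i * x * P j = x * P j := fun j => by
    rw [← Finset.sum_mul, ← Finset.sum_mul, hP, one_mul]
  have hcross : ∑ i ∈ s, ∑ j ∈ s, P i * x * P j = x := by
    simp_rw [hleft, ← Finset.sum_mul, hP, one_mul]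
  have hcross' : ∑ i ∈ s, ∑ j ∈ s, P j * x * P i = x := by
    simp_rw [hright, ← Finset.mul_sum, hP, mul_one]
  simp only [sub_mul, mul_sub, Finset.sum_sub_distrib, Finset.sum_const, hcross, hcross']
  rw [← Finset.smul_sum]
  abel

theorem Matrix.PosSemidef.card_nsmul_sum_mul_mul_sub {𝕜 ι : Type*} [RCLike 𝕜]
    {X : Matrix n n 𝕜} (hX : X.PosSemidef) (s : Finset ι) {P : ι → Matrix n n 𝕜}
    (hP : ∀ i ∈ s, (P i).IsHermitian) (hsum : ∑ i ∈ s, P i = 1) :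
    (s.card • ∑ i ∈ s, P i * X * P i - X).PosSemidef := by
  have hsq : (∑ i ∈ s, ∑ j ∈ s, (P i - P j) * X * (P i - P j)).PosSemidef :=
    Matrix.posSemidef_sum s fun i hi => Matrix.posSemidef_sum s fun j hj => by
      simpa only [((hP i hi).sub (hP j hj)).eq] using hX.conjTranspose_mul_mul_same (P i - P j)
  rw [s.sum_sum_sub_mul_mul_sub hsum] at hsq
  have half : (2⁻¹ : 𝕜) • (2 • (s.card • ∑ i ∈ s, P i * X * P i - X)) =
      s.card • ∑ i ∈ s, P i * X * P i - X := by
    rw [two_nsmul, ← two_smul 𝕜, smul_smul, inv_mul_cancel₀ two_ne_zero, one_smul]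
  exact half ▸ hsq.smul (by positivity)

theorem matFun_eq_cfc {A : Matrix n n ℂ} (hA : A.IsHermitian) (f : ℝ → ℝ) :
    matFun A f = cfc f A := by
  rw [matFun, dif_pos hA, hA.cfc_eq]

theorem specProj_isHermitian {A : Matrix n n ℂ} (hA : A.IsHermitian) (lam : ℝ) :
    (specProj A lam).IsHermitian := by
  rw [specProj, matFun_eq_cfc hA]
  exact IsSelfAdjoint.cfc

theorem sum_specProj {A : Matrix n n ℂ} (hA : A.IsHermitian) :
    ∑ lam ∈ specSet A, specProj A lam = 1 := by
  simp only [specProj, matFun_eq_cfc hA]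
  rw [← cfc_sum _ _ _ fun _ _ => A.finite_real_spectrum.continuousOn _, ← cfc_one ℝ A]
  refine cfc_congr fun x hx => ?_
  obtain ⟨i, rfl⟩ := hA.spectrum_real_eq_range_eigenvalues ▸ hx
  simp [specSet, dif_pos hA]

/-- Pinching inequality: `|spec(ω)| ⬝ P_ω(X) ≥ X` in the Loewner order. -/
theorem pinching_inequality {d : ℕ} (ω X : Matrix (Fin d) (Fin d) ℂ)
    (hω : IsDensity ω) (hX : X.PosSemidef) :
    (((specSet ω).card : ℂ) • pinch ω X - X).PosSemidef := by
  have hH : ω.IsHermitian := hω.1.isHermitian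
  rw [Nat.cast_smul_eq_nsmul, pinch]
  exact hX.card_nsmul_sum_mul_mul_sub _ (fun lam _ => specProj_isHermitian hH lam)
    (sum_specProj hH)
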